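/- arXiv:2006.02845 — 5 statements merged into one kernel-verified Lean document; each statement's English description precedes it below -/
import Mathlib

section
/- Let Y_1, Y_2, ..., Y_n be mutually independent real random variables and let W_k = Y_1 + ... + Y_k. Then for any real number x and any h ≥ 0, P(max_{1 ≤ k ≤ n} W_k > x) ≤ e^{-hx} · max_{1 ≤ k ≤ n} E[e^{h W_k}]. -/
open MeasureTheory ProbabilityTheory Real Finset

/-- Pad a function on a finset of naturals by zero. -/
noncomputable def stmt0pad (S : Finset ℕ) (v : {i // i ∈ S} → ℝ) (i : ℕ) : ℝ :=
  if hi : i ∈ S then v ⟨i, hi⟩ else 0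

lemma stmt0pad_measurable (S : Finset ℕ) (i : ℕ) :
    Measurable (fun v : {i // i ∈ S} → ℝ => stmt0pad S v i) := by
  by_cases hi : i ∈ S
  · simpa [stmt0pad, hi] using measurable_pi_apply (⟨i, hi⟩ : {i // i ∈ S})
  · simpa [stmt0pad, hi] using measurable_const

lemma stmt0pad_apply (S : Finset ℕ) (f : ℕ → ℝ) (i : ℕ) (hi : i ∈ S) :
    stmt0pad S (fun j : {i // i ∈ S} => f j) i = f i := by
  simp [stmt0pad, hi]

set_option maxHeartbeats 1000000 in
/-- Maximal exponential inequality for partial sums of independent random variables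
(finite case): `P(max_{1≤k≤n} W_k > x) ≤ e^{-hx} · max_{1≤k≤n} E[e^{h W_k}]`. -/
theorem stmt0 {Ω : Type*} [MeasurableSpace Ω] (μ : Measure Ω) [IsProbabilityMeasure μ]
    (Y : ℕ → Ω → ℝ) (hmeas : ∀ i, Measurable (Y i))
    (hind : iIndepFun Y μ)
    (n : ℕ) (hn : 0 < n) (x h : ℝ) (hh : 0 ≤ h)
    (W : ℕ → Ω → ℝ) (hW : ∀ k ω, W k ω = ∑ i ∈ Finset.range k, Y i ω) :
    μ {ω | x < (Finset.Icc 1 n).sup' (Finset.nonempty_Icc.mpr hn) (fun k => W k ω)}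
      ≤ ENNReal.ofReal (Real.exp (-h * x)) *
        (Finset.Icc 1 n).sup (fun k => ∫⁻ ω, ENNReal.ofReal (Real.exp (h * W k ω)) ∂μ) := by
  classical
  set g : ℕ → Ω → ENNReal := fun k ω => ENNReal.ofReal (Real.exp (h * W k ω)) with hg
  set L : ℕ → ENNReal := fun k => ∫⁻ ω, g k ω ∂μ with hL
  set S : ENNReal := (Finset.Icc 1 n).sup L with hS
  have hWmeas : ∀ k, Measurable (W k) := by
    intro k
    have : W k = fun ω => ∑ i ∈ Finset.range k, Y i ω := funext fun ω => hW k ω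
    rw [this]
    exact Finset.measurable_sum _ fun i _ => hmeas i
  have hgmeas : ∀ k, Measurable (g k) := fun k =>
    ENNReal.measurable_ofReal.comp (Real.measurable_exp.comp ((hWmeas k).const_mul h))
  have hnmem : n ∈ Finset.Icc 1 n := Finset.mem_Icc.mpr ⟨hn, le_rfl⟩
  have hcexp : (0:ENNReal) < ENNReal.ofReal (Real.exp (-h * x)) :=
    ENNReal.ofReal_pos.mpr (Real.exp_pos _)
  show μ _ ≤ ENNReal.ofReal (Real.exp (-h * x)) * S
  by_cases hLn : L n = ⊤
  · have hStop : S = ⊤ := top_le_iff.mp (hLn ▸ Finset.le_sup (f := L) hnmem)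
    rw [hStop, ENNReal.mul_top hcexp.ne']
    exact le_top
  -- main case
  have hLn0 : L n ≠ 0 := by
    intro h0
    have h1 := (lintegral_eq_zero_iff (hgmeas n)).mp h0
    have h2 : ∀ᵐ ω ∂μ, False := by
      refine h1.mono fun ω hω => ?_
      simp only [hg, Pi.zero_apply] at hω
      exact absurd hω (ENNReal.ofReal_pos.mpr (Real.exp_pos _)).ne'
    have : (MeasureTheory.ae μ).NeBot := ae_neBot.mpr (IsProbabilityMeasure.ne_zero μ)
    exact h2.exists.elim fun _ hf => hf
  -- the first-passage sets
  set A : ℕ → Set Ω := fun k =>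
    {ω | x < W k ω} ∩ ⋂ j ∈ Finset.Icc 1 (k - 1), {ω | W j ω ≤ x} with hA
  have hAmeas : ∀ k, MeasurableSet (A k) := by
    intro k
    refine (measurableSet_lt measurable_const (hWmeas k)).inter ?_
    exact MeasurableSet.biInter (Set.to_countable _) fun j _ =>
      measurableSet_le (hWmeas j) measurable_const
  have hmemA : ∀ k ω, ω ∈ A k ↔ x < W k ω ∧ ∀ j ∈ Finset.Icc 1 (k-1), W j ω ≤ x := by
    intro k ω
    simp [hA, Set.mem_iInter]
  have hdisj : (↑(Finset.Icc 1 n) : Set ℕ).PairwiseDisjoint A := by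
    have key : ∀ a b, 1 ≤ a → a < b → Disjoint (A a) (A b) := by
      intro a b ha hab
      rw [Set.disjoint_left]
      intro ω hωa hωb
      have h1 := ((hmemA b ω).mp hωb).2 a (Finset.mem_Icc.mpr ⟨ha, by omega⟩)
      exact absurd ((hmemA a ω).mp hωa).1 (not_lt.mpr h1)
    intro a ha b hb hab
    rcases lt_or_gt_of_ne hab with hlt | hgt
    · exact key a b (Finset.mem_Icc.mp (by simpa using ha)).1 hlt
    · exact (key b a (Finset.mem_Icc.mp (by simpa using hb)).1 hgt).symm
  have hunion : {ω | x < (Finset.Icc 1 n).sup' (Finset.nonempty_Icc.mpr hn) (fun k => W k ω)}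
      = ⋃ k ∈ Finset.Icc 1 n, A k := by
    ext ω
    simp only [Set.mem_setOf_eq, Finset.lt_sup'_iff, Set.mem_iUnion, exists_prop]
    constructor
    · rintro ⟨k, hk, hkx⟩
      obtain ⟨hk1, hkn⟩ := Finset.mem_Icc.mp hk
      have hex : ∃ m, 1 ≤ m ∧ x < W m ω := ⟨k, hk1, hkx⟩
      refine ⟨Nat.find hex, ?_, ?_⟩
      · have hle : Nat.find hex ≤ k := Nat.find_min' hex ⟨hk1, hkx⟩
        exact Finset.mem_Icc.mpr ⟨(Nat.find_spec hex).1, le_trans hle hkn⟩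
      · refine (hmemA _ ω).mpr ⟨(Nat.find_spec hex).2, fun j hj => ?_⟩
        obtain ⟨hj1, hj2⟩ := Finset.mem_Icc.mp hj
        have hjlt : j < Nat.find hex := by omega
        have := Nat.find_min hex hjlt
        push_neg at this
        exact this hj1
    · rintro ⟨k, hk, hωk⟩
      exact ⟨k, hk, ((hmemA k ω).mp hωk).1⟩
  -- per-k key inequality
  have hkey : ∀ k ∈ Finset.Icc 1 n,
      μ (A k) * L n ≤ ENNReal.ofReal (Real.exp (-h * x)) * S * ∫⁻ ω in A k, g n ω ∂μ := by
    intro k hk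
    obtain ⟨hk1, hkn⟩ := Finset.mem_Icc.mp hk
    -- the tail factor
    set H : Ω → ENNReal := fun ω => ENNReal.ofReal (Real.exp (h * ∑ i ∈ Finset.Ico k n, Y i ω))
      with hH
    have hHmeas : Measurable H :=
      ENNReal.measurable_ofReal.comp (Real.measurable_exp.comp
        ((Finset.measurable_sum _ fun i _ => hmeas i).const_mul h))
    have hgn_split : ∀ ω, g n ω = g k ω * H ω := by
      intro ω
      simp only [hg, hH]
      rw [← ENNReal.ofReal_mul (Real.exp_pos _).le, ← Real.exp_add, ← mul_add, hW, hW,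
        Finset.sum_range_add_sum_Ico _ hkn]
    -- independence setup
    have hdisjST : Disjoint (Finset.range k) (Finset.Ico k n) := by
      rw [Finset.disjoint_left]
      intro i hi hi'
      rw [Finset.mem_range] at hi
      rw [Finset.mem_Ico] at hi'
      omega
    have hindep := hind.indepFun_finset (Finset.range k) (Finset.Ico k n) hdisjST hmeas
    -- ψ: the tail function
    set ψ : ({i // i ∈ Finset.Ico k n} → ℝ) → ENNReal := fun v =>
      ENNReal.ofReal (Real.exp (h * ∑ i ∈ Finset.Ico k n, stmt0pad (Finset.Ico k n) v i))
      with hψ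
    have hψmeas : Measurable ψ :=
      ENNReal.measurable_ofReal.comp (Real.measurable_exp.comp
        ((Finset.measurable_sum _ fun i _ => stmt0pad_measurable _ i).const_mul h))
    have hψcomp : H = ψ ∘ (fun ω (i : {i // i ∈ Finset.Ico k n}) => Y i ω) := by
      funext ω
      simp only [hψ, hH, Function.comp_apply]
      have hsum : ∑ i ∈ Finset.Ico k n,
          stmt0pad (Finset.Ico k n) (fun i : {i // i ∈ Finset.Ico k n} => Y i ω) i
          = ∑ i ∈ Finset.Ico k n, Y i ω :=
        Finset.sum_congr rfl fun i hi => stmt0pad_apply (Finset.Ico k n) (fun j => Y j ω) i hi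
      rw [hsum]
    -- partial sums as a function of the first k coordinates
    set s : ℕ → ({i // i ∈ Finset.range k} → ℝ) → ℝ := fun j v =>
      ∑ i ∈ Finset.range j, stmt0pad (Finset.range k) v i with hs
    have hsmeas : ∀ j, Measurable (s j) := fun j =>
      Finset.measurable_sum _ fun i _ => stmt0pad_measurable _ i
    have hscomp : ∀ (ω) (j), j ≤ k → s j (fun i : {i // i ∈ Finset.range k} => Y i ω) = W j ω := by
      intro ω j hj
      rw [hs, hW]
      refine Finset.sum_congr rfl fun i hi => ?_
      exact stmt0pad_apply (Finset.range k) (fun j => Y j ω) i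
        (Finset.mem_range.mpr (lt_of_lt_of_le (Finset.mem_range.mp hi) hj))
    -- φ: the head function (indicator)
    set B : Set ({i // i ∈ Finset.range k} → ℝ) :=
      {v | x < s k v} ∩ ⋂ j ∈ Finset.Icc 1 (k-1), {v | s j v ≤ x} with hB
    have hBmeas : MeasurableSet B := by
      refine (measurableSet_lt measurable_const (hsmeas k)).inter ?_
      exact MeasurableSet.biInter (Set.to_countable _) fun j _ =>
        measurableSet_le (hsmeas j) measurable_const
    set φ : ({i // i ∈ Finset.range k} → ℝ) → ENNReal := fun v =>
      Set.indicator B (fun v => ENNReal.ofReal (Real.exp (h * s k v))) v with hφ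
    have hφmeas : Measurable φ :=
      Measurable.indicator (ENNReal.measurable_ofReal.comp
        (Real.measurable_exp.comp ((hsmeas k).const_mul h))) hBmeas
    have hφcomp : Set.indicator (A k) (g k)
        = φ ∘ (fun ω (i : {i // i ∈ Finset.range k}) => Y i ω) := by
      funext ω
      have hmemB : (fun i : {i // i ∈ Finset.range k} => Y i ω) ∈ B ↔ ω ∈ A k := by
        rw [hB, hA]
        simp only [Set.mem_inter_iff, Set.mem_iInter, Set.mem_setOf_eq]
        constructor
        · rintro ⟨h1, h2⟩
          refine ⟨by rwa [hscomp ω k le_rfl] at h1, fun j hj => ?_⟩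
          have := h2 j hj
          rwa [hscomp ω j (by have := Finset.mem_Icc.mp hj; omega)] at this
        · rintro ⟨h1, h2⟩
          refine ⟨by rwa [hscomp ω k le_rfl], fun j hj => ?_⟩
          rw [hscomp ω j (by have := Finset.mem_Icc.mp hj; omega)]
          exact h2 j hj
      simp only [hφ, Function.comp_apply]
      by_cases hω : ω ∈ A k
      · rw [Set.indicator_of_mem hω, Set.indicator_of_mem (hmemB.mpr hω), hg,
          hscomp ω k le_rfl]
      · rw [Set.indicator_of_notMem hω, Set.indicator_of_notMem (fun hc => hω (hmemB.mp hc))]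
    -- independence of the indicator-weighted head and tail
    have hindGH : IndepFun (Set.indicator (A k) (g k)) H μ := by
      rw [hφcomp, hψcomp]
      exact hindep.comp hφmeas hψmeas
    have hindgH : IndepFun (g k) H μ := by
      have hφ'comp : g k = (fun v => ENNReal.ofReal (Real.exp (h * s k v)))
          ∘ (fun ω (i : {i // i ∈ Finset.range k}) => Y i ω) := by
        funext ω
        simp only [Function.comp_apply, hg, hscomp ω k le_rfl]
      rw [hφ'comp, hψcomp]
      exact hindep.comp (ENNReal.measurable_ofReal.comp
        (Real.measurable_exp.comp ((hsmeas k).const_mul h))) hψmeas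
    -- product formulas
    have hmul1 : ∫⁻ ω in A k, g n ω ∂μ = (∫⁻ ω in A k, g k ω ∂μ) * ∫⁻ ω, H ω ∂μ := by
      have e1 : ∫⁻ ω, (Set.indicator (A k) (g k) * H) ω ∂μ
          = (∫⁻ ω, Set.indicator (A k) (g k) ω ∂μ) * ∫⁻ ω, H ω ∂μ :=
        lintegral_mul_eq_lintegral_mul_lintegral_of_indepFun
          ((hgmeas k).indicator (hAmeas k)) hHmeas hindGH
      have e2 : (Set.indicator (A k) (g k) * H) = Set.indicator (A k) (g n) := by
        funext ω
        by_cases hω : ω ∈ A k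
        · simp [Set.indicator_of_mem hω, hgn_split ω]
        · simp [Set.indicator_of_notMem hω]
      rw [e2] at e1
      rw [lintegral_indicator (hAmeas k), lintegral_indicator (hAmeas k)] at e1
      exact e1
    have hmul2 : L n = L k * ∫⁻ ω, H ω ∂μ := by
      have e1 : ∫⁻ ω, (g k * H) ω ∂μ = (∫⁻ ω, g k ω ∂μ) * ∫⁻ ω, H ω ∂μ :=
        lintegral_mul_eq_lintegral_mul_lintegral_of_indepFun (hgmeas k) hHmeas hindgH
      have e2 : (g k * H) = g n := by
        funext ω
        simp [hgn_split ω]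
      rw [e2] at e1
      exact e1
    -- Chernoff on A k
    have hcher : μ (A k) ≤ ENNReal.ofReal (Real.exp (-h * x)) * ∫⁻ ω in A k, g k ω ∂μ := by
      have hptw : ∀ ω ∈ A k, (1:ENNReal) ≤ ENNReal.ofReal (Real.exp (-h * x)) * g k ω := by
        intro ω hω
        rw [hg]
        rw [← ENNReal.ofReal_mul (Real.exp_pos _).le, ← Real.exp_add]
        refine ENNReal.one_le_ofReal.mpr (Real.one_le_exp ?_)
        have hx1 : x < W k ω := ((hmemA k ω).mp hω).1
        nlinarith
      calc μ (A k) = ∫⁻ _ω in A k, (1:ENNReal) ∂μ := (setLIntegral_one _).symm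
        _ ≤ ∫⁻ ω in A k, ENNReal.ofReal (Real.exp (-h * x)) * g k ω ∂μ :=
            setLIntegral_mono (measurable_const.mul (hgmeas k)) hptw
        _ = ENNReal.ofReal (Real.exp (-h * x)) * ∫⁻ ω in A k, g k ω ∂μ :=
            lintegral_const_mul _ (hgmeas k)
    -- combine
    have hLkS : L k ≤ S := Finset.le_sup (f := L) hk
    calc μ (A k) * L n
        ≤ (ENNReal.ofReal (Real.exp (-h * x)) * ∫⁻ ω in A k, g k ω ∂μ) * L n :=
          mul_le_mul_left hcher _
      _ = ENNReal.ofReal (Real.exp (-h * x)) * L k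
            * ((∫⁻ ω in A k, g k ω ∂μ) * ∫⁻ ω, H ω ∂μ) := by
          rw [hmul2]; ring
      _ = ENNReal.ofReal (Real.exp (-h * x)) * L k * ∫⁻ ω in A k, g n ω ∂μ := by
          rw [hmul1]
      _ ≤ ENNReal.ofReal (Real.exp (-h * x)) * S * ∫⁻ ω in A k, g n ω ∂μ := by
          exact mul_le_mul_left (mul_le_mul_right hLkS _) _
  -- sum
  have hsum : μ {ω | x < (Finset.Icc 1 n).sup' (Finset.nonempty_Icc.mpr hn) (fun k => W k ω)} * L n
      ≤ ENNReal.ofReal (Real.exp (-h * x)) * S * L n := by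
    rw [hunion, measure_biUnion_finset hdisj fun k _ => hAmeas k, Finset.sum_mul]
    calc ∑ k ∈ Finset.Icc 1 n, μ (A k) * L n
        ≤ ∑ k ∈ Finset.Icc 1 n,
            ENNReal.ofReal (Real.exp (-h * x)) * S * ∫⁻ ω in A k, g n ω ∂μ :=
          Finset.sum_le_sum hkey
      _ = ENNReal.ofReal (Real.exp (-h * x)) * S
            * ∑ k ∈ Finset.Icc 1 n, ∫⁻ ω in A k, g n ω ∂μ := by
          rw [Finset.mul_sum]
      _ ≤ ENNReal.ofReal (Real.exp (-h * x)) * S * L n := by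
          refine mul_le_mul_right ?_ _
          rw [← lintegral_biUnion_finset hdisj (fun k _ => hAmeas k) (g n)]
          exact setLIntegral_le_lintegral _ _
  exact (ENNReal.mul_le_mul_iff_left hLn0 hLn).mp hsum
end

section
/- Let Y_1, Y_2, ... be an infinite sequence of mutually independent real random variables and W_k = Y_1 + ... + Y_k. Then for any real x and any h ≥ 0, P(sup_{k ≥ 1} W_k > x) ≤ e^{-hx} · sup_{k ≥ 1} E[e^{h W_k}]. -/
open MeasureTheory ProbabilityTheory Real Finset
open scoped ENNReal

lemma key_aux {Ω : Type*} [MeasurableSpace Ω] (μ : Measure Ω)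
    (Y : ℕ → Ω → ℝ) (h : ℝ) (hmeas : ∀ i, Measurable (Y i))
    (hind : iIndepFun Y μ) (n : ℕ)
    (Φ : (ℕ → ℝ) → ℝ≥0∞) (hΦ : Measurable Φ)
    (hdep : ∀ z z' : ℕ → ℝ, (∀ i < n, z i = z' i) → Φ z = Φ z') :
    ∫⁻ ω, Φ (fun i => Y i ω) * ENNReal.ofReal (Real.exp (h * Y n ω)) ∂μ
      = (∫⁻ ω, Φ (fun i => Y i ω) ∂μ) * ∫⁻ ω, ENNReal.ofReal (Real.exp (h * Y n ω)) ∂μ := by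
  classical
  have hdisj : Disjoint (range n) ({n} : Finset ℕ) := by
    simp [Finset.disjoint_singleton_right]
  have hI := hind.indepFun_finset (range n) {n} hdisj hmeas
  set E : ((i : (range n : Finset ℕ)) → ℝ) → ℕ → ℝ :=
    fun y i => if hi : i ∈ range n then y ⟨i, hi⟩ else 0 with hE
  have hEmeas : Measurable E := by
    apply measurable_pi_lambda
    intro i
    by_cases hi : i ∈ range n
    · simp only [hE, dif_pos hi]; exact measurable_pi_apply _
    · simp only [hE, dif_neg hi]; exact measurable_const
  have hφ : Measurable (Φ ∘ E) := hΦ.comp hEmeas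
  set ψ : ((i : ({n} : Finset ℕ)) → ℝ) → ℝ≥0∞ :=
    fun y => ENNReal.ofReal (Real.exp (h * y ⟨n, Finset.mem_singleton_self n⟩)) with hψdef
  have hψ : Measurable ψ :=
    by rw [hψdef]; fun_prop
  have hcomp := hI.comp hφ hψ
  have heq : ((Φ ∘ E) ∘ fun (a : Ω) (i : (range n : Finset ℕ)) => Y (↑i) a)
      = fun ω => Φ (fun i => Y i ω) := by
    funext ω
    exact hdep _ _ (fun i hi => by
      simp only [Function.comp_apply, hE]
      rw [dif_pos (Finset.mem_range.2 hi)])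
  have heq2 : (ψ ∘ fun (a : Ω) (i : ({n} : Finset ℕ)) => Y (↑i) a)
      = fun ω => ENNReal.ofReal (Real.exp (h * Y n ω)) := rfl
  rw [heq, heq2] at hcomp
  have := lintegral_mul_eq_lintegral_mul_lintegral_of_indepFun
    (μ := μ) (hΦ.comp (measurable_pi_lambda _ fun i => hmeas i))
    (((hmeas n).const_mul h).exp.ennreal_ofReal) hcomp
  simpa [Pi.mul_apply] using this

section Aux

variable {Ω : Type*} [MeasurableSpace Ω]

/-- partial sums -/
noncomputable def WS (Y : ℕ → Ω → ℝ) (k : ℕ) (ω : Ω) : ℝ := ∑ i ∈ Finset.range k, Y i ω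

/-- exponential of partial sums -/
noncomputable def FF (Y : ℕ → Ω → ℝ) (h : ℝ) (k : ℕ) (ω : Ω) : ℝ≥0∞ :=
  ENNReal.ofReal (Real.exp (h * WS Y k ω))

/-- integral of exponential of a single variable -/
noncomputable def qq (μ : Measure Ω) (Y : ℕ → Ω → ℝ) (h : ℝ) (i : ℕ) : ℝ≥0∞ :=
  ∫⁻ ω, ENNReal.ofReal (Real.exp (h * Y i ω)) ∂μ

/-- the event that the walk stayed `≤ x` up to time `n` -/
def CC (Y : ℕ → Ω → ℝ) (x : ℝ) (n : ℕ) : Set Ω :=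
  {ω | ∀ m, 1 ≤ m → m ≤ n → WS Y m ω ≤ x}

/-- the event of first passage above `x` at time `n` -/
def AA (Y : ℕ → Ω → ℝ) (x : ℝ) (n : ℕ) : Set Ω :=
  {ω | x < WS Y n ω ∧ ∀ m, 1 ≤ m → m < n → WS Y m ω ≤ x}

variable {Y : ℕ → Ω → ℝ} {x h : ℝ} {μ : Measure Ω}

lemma WS_meas (hmeas : ∀ i, Measurable (Y i)) (k : ℕ) : Measurable (WS Y k) :=
  Finset.measurable_sum _ fun i _ => hmeas i

lemma FF_meas (hmeas : ∀ i, Measurable (Y i)) (k : ℕ) : Measurable (FF Y h k) :=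
  ((WS_meas hmeas k).const_mul h).exp.ennreal_ofReal

lemma CC_meas (hmeas : ∀ i, Measurable (Y i)) (n : ℕ) : MeasurableSet (CC Y x n) := by
  have : CC Y x n = ⋂ (m : ℕ) (_ : 1 ≤ m) (_ : m ≤ n), {ω | WS Y m ω ≤ x} := by
    ext ω; simp [CC, Set.mem_iInter]
  rw [this]
  exact MeasurableSet.iInter fun m => MeasurableSet.iInter fun _ =>
    MeasurableSet.iInter fun _ => measurableSet_le (WS_meas hmeas m) measurable_const

lemma AA_meas (hmeas : ∀ i, Measurable (Y i)) (n : ℕ) : MeasurableSet (AA Y x n) := by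
  have : AA Y x n = {ω | x < WS Y n ω} ∩
      ⋂ (m : ℕ) (_ : 1 ≤ m) (_ : m < n), {ω | WS Y m ω ≤ x} := by
    ext ω; simp [AA, Set.mem_iInter]
  rw [this]
  exact (measurableSet_lt measurable_const (WS_meas hmeas n)).inter
    (MeasurableSet.iInter fun m => MeasurableSet.iInter fun _ =>
      MeasurableSet.iInter fun _ => measurableSet_le (WS_meas hmeas m) measurable_const)

lemma FF_step (n : ℕ) (ω : Ω) :
    FF Y h (n + 1) ω = FF Y h n ω * ENNReal.ofReal (Real.exp (h * Y n ω)) := by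
  have hws : WS Y (n + 1) ω = WS Y n ω + Y n ω := Finset.sum_range_succ _ _
  rw [FF, FF, hws, mul_add, Real.exp_add, ENNReal.ofReal_mul (Real.exp_nonneg _)]

lemma CC_split (n : ℕ) : CC Y x n = AA Y x (n + 1) ∪ CC Y x (n + 1) := by
  ext ω
  simp only [CC, AA, Set.mem_setOf_eq, Set.mem_union]
  constructor
  · intro hc
    by_cases hx1 : WS Y (n + 1) ω ≤ x
    · right; intro m h1 h2
      rcases eq_or_lt_of_le h2 with rfl | hlt
      · exact hx1
      · exact hc m h1 (Nat.lt_succ_iff.mp hlt)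
    · exact Or.inl ⟨lt_of_not_ge hx1, fun m h1 h2 => hc m h1 (Nat.lt_succ_iff.mp h2)⟩
  · rintro (⟨_, hc⟩ | hc) m h1 h2
    · exact hc m h1 (Nat.lt_succ_of_le h2)
    · exact hc m h1 (h2.trans (Nat.le_succ n))

lemma AC_disj (n : ℕ) : Disjoint (AA Y x (n + 1)) (CC Y x (n + 1)) := by
  rw [Set.disjoint_left]
  rintro ω ⟨hgt, -⟩ hc
  exact absurd (hc (n + 1) (Nat.succ_le_succ (Nat.zero_le n)) le_rfl) (not_le.mpr hgt)

lemma CC_zero : CC Y x 0 = Set.univ := by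
  ext ω; simp only [CC, Set.mem_setOf_eq, Set.mem_univ, iff_true]
  intro m h1 h2; omega

lemma CC_lintegral_split (hmeas : ∀ i, Measurable (Y i)) (n : ℕ) (f : Ω → ℝ≥0∞) :
    ∫⁻ ω in CC Y x n, f ω ∂μ
      = ∫⁻ ω in AA Y x (n + 1), f ω ∂μ + ∫⁻ ω in CC Y x (n + 1), f ω ∂μ := by
  rw [CC_split (x := x) n, lintegral_union (CC_meas hmeas (n + 1)) (AC_disj n)]

/-- product formula -/
lemma FF_lintegral_prod [IsProbabilityMeasure μ] (hmeas : ∀ i, Measurable (Y i))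
    (hind : iIndepFun Y μ) (k : ℕ) :
    ∫⁻ ω, FF Y h k ω ∂μ = ∏ i ∈ Finset.range k, qq μ Y h i := by
  induction k with
  | zero =>
    have h0 : ∀ ω : Ω, FF Y h 0 ω = 1 := by
      intro ω; simp [FF, WS]
    simp only [h0, Finset.range_zero, Finset.prod_empty, lintegral_one, measure_univ]
  | succ n ih =>
    set Φ : (ℕ → ℝ) → ℝ≥0∞ :=
      fun z => ENNReal.ofReal (Real.exp (h * ∑ i ∈ Finset.range n, z i)) with hΦdef
    have hΦ : Measurable Φ :=
      ((Finset.measurable_sum _ fun i _ => measurable_pi_apply i).const_mul h).exp.ennreal_ofReal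
    have hdep : ∀ z z' : ℕ → ℝ, (∀ i < n, z i = z' i) → Φ z = Φ z' := by
      intro z z' hzz
      simp only [hΦdef]
      rw [Finset.sum_congr rfl fun i hi => hzz i (Finset.mem_range.mp hi)]
    have hΦY : ∀ ω, Φ (fun i => Y i ω) = FF Y h n ω := fun ω => rfl
    have hrw : ∀ ω, FF Y h (n + 1) ω
        = Φ (fun i => Y i ω) * ENNReal.ofReal (Real.exp (h * Y n ω)) := by
      intro ω; rw [FF_step n ω, hΦY]
    calc ∫⁻ ω, FF Y h (n + 1) ω ∂μ
        = ∫⁻ ω, Φ (fun i => Y i ω) * ENNReal.ofReal (Real.exp (h * Y n ω)) ∂μ := by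
          simp only [hrw]
      _ = (∫⁻ ω, Φ (fun i => Y i ω) ∂μ) * ∫⁻ ω, ENNReal.ofReal (Real.exp (h * Y n ω)) ∂μ :=
          key_aux μ Y h hmeas hind n Φ hΦ hdep
      _ = (∫⁻ ω, FF Y h n ω ∂μ) * qq μ Y h n := by simp only [hΦY]; rfl
      _ = (∏ i ∈ Finset.range n, qq μ Y h i) * qq μ Y h n := by rw [ih]
      _ = ∏ i ∈ Finset.range (n + 1), qq μ Y h i := (Finset.prod_range_succ _ _).symm

/-- key independence step on the event `CC n` -/
lemma CC_step (hmeas : ∀ i, Measurable (Y i))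
    (hind : iIndepFun Y μ) (n : ℕ) :
    ∫⁻ ω in CC Y x n, FF Y h (n + 1) ω ∂μ
      = qq μ Y h n * ∫⁻ ω in CC Y x n, FF Y h n ω ∂μ := by
  classical
  set S : Set (ℕ → ℝ) := {z | ∀ m, 1 ≤ m → m ≤ n → ∑ i ∈ Finset.range m, z i ≤ x} with hSdef
  have hSmeas : MeasurableSet S := by
    have : S = ⋂ (m : ℕ) (_ : 1 ≤ m) (_ : m ≤ n), {z : ℕ → ℝ | ∑ i ∈ Finset.range m, z i ≤ x} := by
      ext z; simp [hSdef, Set.mem_iInter]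
    rw [this]
    exact MeasurableSet.iInter fun m => MeasurableSet.iInter fun _ =>
      MeasurableSet.iInter fun _ =>
        measurableSet_le (Finset.measurable_sum _ fun i _ => measurable_pi_apply i)
          measurable_const
  set v : (ℕ → ℝ) → ℝ≥0∞ :=
    fun z => ENNReal.ofReal (Real.exp (h * ∑ i ∈ Finset.range n, z i)) with hvdef
  have hv : Measurable v :=
    ((Finset.measurable_sum _ fun i _ => measurable_pi_apply i).const_mul h).exp.ennreal_ofReal
  set Φ : (ℕ → ℝ) → ℝ≥0∞ := fun z => S.indicator v z with hΦdef
  have hΦ : Measurable Φ := hv.indicator hSmeas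
  have hdep : ∀ z z' : ℕ → ℝ, (∀ i < n, z i = z' i) → Φ z = Φ z' := by
    intro z z' hzz
    have hmemb : z ∈ S ↔ z' ∈ S := by
      simp only [hSdef, Set.mem_setOf_eq]
      constructor <;> intro hz m h1 h2 <;>
        [ rw [← Finset.sum_congr rfl fun i hi => hzz i (lt_of_lt_of_le (Finset.mem_range.mp hi) h2)];
          rw [Finset.sum_congr rfl fun i hi => hzz i (lt_of_lt_of_le (Finset.mem_range.mp hi) h2)]] <;>
        exact hz m h1 h2
    have hvv : v z = v z' := by
      simp only [hvdef]
      rw [Finset.sum_congr rfl fun i hi => hzz i (Finset.mem_range.mp hi)]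
    simp only [hΦdef, Set.indicator_apply]
    rw [if_congr hmemb hvv rfl]
  have hmem : ∀ ω : Ω, (fun i => Y i ω) ∈ S ↔ ω ∈ CC Y x n := by
    intro ω
    simp only [hSdef, Set.mem_setOf_eq, CC, WS]
  have hΦY : ∀ ω, Φ (fun i => Y i ω) = (CC Y x n).indicator (FF Y h n) ω := by
    intro ω
    by_cases hω : ω ∈ CC Y x n
    · rw [hΦdef]
      show S.indicator v (fun i => Y i ω) = _
      rw [Set.indicator_of_mem ((hmem ω).mpr hω), Set.indicator_of_mem hω]
      rfl
    · rw [hΦdef]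
      show S.indicator v (fun i => Y i ω) = _
      rw [Set.indicator_of_notMem (fun hc => hω ((hmem ω).mp hc)),
        Set.indicator_of_notMem hω]
  have hΦY2 : ∀ ω, Φ (fun i => Y i ω) * ENNReal.ofReal (Real.exp (h * Y n ω))
      = (CC Y x n).indicator (FF Y h (n + 1)) ω := by
    intro ω
    rw [hΦY]
    by_cases hω : ω ∈ CC Y x n
    · rw [Set.indicator_of_mem hω, Set.indicator_of_mem hω, FF_step]
    · rw [Set.indicator_of_notMem hω, Set.indicator_of_notMem hω, zero_mul]
  have hkey := key_aux μ Y h hmeas hind n Φ hΦ hdep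
  simp only [hΦY2] at hkey
  simp only [hΦY] at hkey
  rw [lintegral_indicator (CC_meas hmeas n), lintegral_indicator (CC_meas hmeas n)] at hkey
  rw [hkey, mul_comm]
  rfl

/-- running best product -/
noncomputable def ssup (μ : Measure Ω) (Y : ℕ → Ω → ℝ) (h : ℝ) (N n : ℕ) : ℝ≥0∞ :=
  ⨆ k, ⨆ (_ : k ∈ Finset.Icc n N), ∏ i ∈ Finset.Ico n k, qq μ Y h i

lemma ssup_one {N n : ℕ} (hnN : n ≤ N) : 1 ≤ ssup μ Y h N n := by
  rw [ssup]
  refine le_trans ?_ (le_iSup₂ (f := fun k (_ : k ∈ Finset.Icc n N) =>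
    ∏ i ∈ Finset.Ico n k, qq μ Y h i) n (Finset.mem_Icc.mpr ⟨le_rfl, hnN⟩))
  simp

lemma ssup_rec {N n : ℕ} (hnN : n < N) :
    qq μ Y h n * ssup μ Y h N (n + 1) ≤ ssup μ Y h N n := by
  rw [ssup, ENNReal.mul_iSup]
  apply iSup_le; intro k
  rw [ENNReal.mul_iSup]
  apply iSup_le; intro hk
  have hk' := Finset.mem_Icc.mp hk
  have hnk : n < k := hk'.1
  have hprod : qq μ Y h n * ∏ i ∈ Finset.Ico (n + 1) k, qq μ Y h i
      = ∏ i ∈ Finset.Ico n k, qq μ Y h i :=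
    (Finset.prod_eq_prod_Ico_succ_bot hnk _).symm
  rw [hprod]
  exact le_iSup₂_of_le k (Finset.mem_Icc.mpr ⟨le_of_lt hnk, hk'.2⟩) le_rfl

lemma backward (hmeas : ∀ i, Measurable (Y i))
    (hind : iIndepFun Y μ) (N : ℕ) :
    ∀ d n, n + d = N →
      ∑ j ∈ Finset.Ico n N, ∫⁻ ω in AA Y x (j + 1), FF Y h (j + 1) ω ∂μ
        ≤ ssup μ Y h N n * ∫⁻ ω in CC Y x n, FF Y h n ω ∂μ := by
  intro d
  induction d with
  | zero =>
    intro n hn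
    have : n = N := by omega
    subst this
    simp
  | succ d ih =>
    intro n hn
    have hnN : n < N := by omega
    have hsum : ∑ j ∈ Finset.Ico n N, ∫⁻ ω in AA Y x (j + 1), FF Y h (j + 1) ω ∂μ
        = (∫⁻ ω in AA Y x (n + 1), FF Y h (n + 1) ω ∂μ)
          + ∑ j ∈ Finset.Ico (n + 1) N, ∫⁻ ω in AA Y x (j + 1), FF Y h (j + 1) ω ∂μ :=
      Finset.sum_eq_sum_Ico_succ_bot hnN _
    have hIH := ih (n + 1) (by omega)
    have hone : (1 : ℝ≥0∞) ≤ ssup μ Y h N (n + 1) := ssup_one (by omega)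
    calc ∑ j ∈ Finset.Ico n N, ∫⁻ ω in AA Y x (j + 1), FF Y h (j + 1) ω ∂μ
        = (∫⁻ ω in AA Y x (n + 1), FF Y h (n + 1) ω ∂μ)
          + ∑ j ∈ Finset.Ico (n + 1) N, ∫⁻ ω in AA Y x (j + 1), FF Y h (j + 1) ω ∂μ := hsum
      _ ≤ (∫⁻ ω in AA Y x (n + 1), FF Y h (n + 1) ω ∂μ)
          + ssup μ Y h N (n + 1) * ∫⁻ ω in CC Y x (n + 1), FF Y h (n + 1) ω ∂μ :=
          add_le_add_right hIH _
      _ ≤ ssup μ Y h N (n + 1) * (∫⁻ ω in AA Y x (n + 1), FF Y h (n + 1) ω ∂μ)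
          + ssup μ Y h N (n + 1) * ∫⁻ ω in CC Y x (n + 1), FF Y h (n + 1) ω ∂μ :=
          add_le_add (le_mul_of_one_le_left' hone) le_rfl
      _ = ssup μ Y h N (n + 1) * ((∫⁻ ω in AA Y x (n + 1), FF Y h (n + 1) ω ∂μ)
          + ∫⁻ ω in CC Y x (n + 1), FF Y h (n + 1) ω ∂μ) := (mul_add _ _ _).symm
      _ = ssup μ Y h N (n + 1) * ∫⁻ ω in CC Y x n, FF Y h (n + 1) ω ∂μ := by
          rw [CC_lintegral_split hmeas n]
      _ = ssup μ Y h N (n + 1) * (qq μ Y h n * ∫⁻ ω in CC Y x n, FF Y h n ω ∂μ) := by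
          rw [CC_step hmeas hind n]
      _ = (qq μ Y h n * ssup μ Y h N (n + 1)) * ∫⁻ ω in CC Y x n, FF Y h n ω ∂μ := by
          ring
      _ ≤ ssup μ Y h N n * ∫⁻ ω in CC Y x n, FF Y h n ω ∂μ :=
          mul_le_mul_left (ssup_rec hnN) _

lemma perN [IsProbabilityMeasure μ] (hmeas : ∀ i, Measurable (Y i))
    (hind : iIndepFun Y μ) (N : ℕ) :
    ∑ j ∈ Finset.range N, ∫⁻ ω in AA Y x (j + 1), FF Y h (j + 1) ω ∂μ
      ≤ ⨆ k, ⨆ (_ : 1 ≤ k), ∫⁻ ω, FF Y h k ω ∂μ := by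
  rcases Nat.eq_zero_or_pos N with rfl | hN
  · simp
  have hsum : ∑ j ∈ Finset.range N, ∫⁻ ω in AA Y x (j + 1), FF Y h (j + 1) ω ∂μ
      = (∫⁻ ω in AA Y x 1, FF Y h 1 ω ∂μ)
        + ∑ j ∈ Finset.Ico 1 N, ∫⁻ ω in AA Y x (j + 1), FF Y h (j + 1) ω ∂μ := by
    rw [Finset.range_eq_Ico]
    exact Finset.sum_eq_sum_Ico_succ_bot hN _
  have hb := backward (x := x) (h := h) hmeas hind N (N - 1) 1 (by omega)
  have hone : (1 : ℝ≥0∞) ≤ ssup μ Y h N 1 := ssup_one hN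
  have hlast : ssup μ Y h N 1 * ∫⁻ ω, FF Y h 1 ω ∂μ
      ≤ ⨆ k, ⨆ (_ : 1 ≤ k), ∫⁻ ω, FF Y h k ω ∂μ := by
    rw [ssup, ENNReal.iSup_mul]
    apply iSup_le; intro k
    rw [ENNReal.iSup_mul]
    apply iSup_le; intro hk
    have hk' := Finset.mem_Icc.mp hk
    have h1k : 1 ≤ k := hk'.1
    have heq : (∏ i ∈ Finset.Ico 1 k, qq μ Y h i) * ∫⁻ ω, FF Y h 1 ω ∂μ
        = ∫⁻ ω, FF Y h k ω ∂μ := by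
      rw [FF_lintegral_prod hmeas hind 1, FF_lintegral_prod hmeas hind k,
        Finset.range_one, Finset.prod_singleton, Finset.range_eq_Ico,
        Finset.prod_eq_prod_Ico_succ_bot h1k]
      ring
    rw [heq]
    exact le_iSup₂ (f := fun k (_ : 1 ≤ k) => ∫⁻ ω, FF Y h k ω ∂μ) k h1k
  calc ∑ j ∈ Finset.range N, ∫⁻ ω in AA Y x (j + 1), FF Y h (j + 1) ω ∂μ
      = (∫⁻ ω in AA Y x 1, FF Y h 1 ω ∂μ)
        + ∑ j ∈ Finset.Ico 1 N, ∫⁻ ω in AA Y x (j + 1), FF Y h (j + 1) ω ∂μ := hsum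
    _ ≤ (∫⁻ ω in AA Y x 1, FF Y h 1 ω ∂μ)
        + ssup μ Y h N 1 * ∫⁻ ω in CC Y x 1, FF Y h 1 ω ∂μ := add_le_add_right hb _
    _ ≤ ssup μ Y h N 1 * (∫⁻ ω in AA Y x 1, FF Y h 1 ω ∂μ)
        + ssup μ Y h N 1 * ∫⁻ ω in CC Y x 1, FF Y h 1 ω ∂μ :=
        add_le_add (le_mul_of_one_le_left' hone) le_rfl
    _ = ssup μ Y h N 1 * ((∫⁻ ω in AA Y x 1, FF Y h 1 ω ∂μ)
        + ∫⁻ ω in CC Y x 1, FF Y h 1 ω ∂μ) := (mul_add _ _ _).symm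
    _ = ssup μ Y h N 1 * ∫⁻ ω in CC Y x 0, FF Y h 1 ω ∂μ := by
        rw [CC_lintegral_split hmeas 0]
    _ = ssup μ Y h N 1 * ∫⁻ ω, FF Y h 1 ω ∂μ := by
        rw [CC_zero, Measure.restrict_univ]
    _ ≤ _ := hlast

lemma AA_bound [IsProbabilityMeasure μ] (hmeas : ∀ i, Measurable (Y i)) (hh : 0 ≤ h) (j : ℕ) :
    μ (AA Y x j) ≤ ENNReal.ofReal (Real.exp (-h * x)) * ∫⁻ ω in AA Y x j, FF Y h j ω ∂μ := by
  have h1 : ENNReal.ofReal (Real.exp (h * x)) * μ (AA Y x j)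
      ≤ ∫⁻ ω in AA Y x j, FF Y h j ω ∂μ := by
    rw [← setLIntegral_const]
    refine setLIntegral_mono (FF_meas hmeas j) ?_
    intro ω hω
    exact ENNReal.ofReal_le_ofReal (Real.exp_le_exp.mpr
      (mul_le_mul_of_nonneg_left (le_of_lt hω.1) hh))
  have hE1 : ENNReal.ofReal (Real.exp (-h * x)) * ENNReal.ofReal (Real.exp (h * x)) = 1 := by
    rw [← ENNReal.ofReal_mul (Real.exp_nonneg _), ← Real.exp_add]
    have : -h * x + h * x = 0 := by ring
    rw [this, Real.exp_zero, ENNReal.ofReal_one]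
  calc μ (AA Y x j)
      = (ENNReal.ofReal (Real.exp (-h * x)) * ENNReal.ofReal (Real.exp (h * x))) * μ (AA Y x j) := by
        rw [hE1, one_mul]
    _ = ENNReal.ofReal (Real.exp (-h * x)) * (ENNReal.ofReal (Real.exp (h * x)) * μ (AA Y x j)) :=
        mul_assoc _ _ _
    _ ≤ _ := mul_le_mul_right h1 _

lemma main_aux [IsProbabilityMeasure μ] (hmeas : ∀ i, Measurable (Y i))
    (hind : iIndepFun Y μ) (hh : 0 ≤ h) :
    μ {ω | ∃ k ≥ 1, x < WS Y k ω}
      ≤ ENNReal.ofReal (Real.exp (-h * x)) * ⨆ k, ⨆ (_ : 1 ≤ k), ∫⁻ ω, FF Y h k ω ∂μ := by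
  have hsub : {ω | ∃ k ≥ 1, x < WS Y k ω} ⊆ ⋃ n : ℕ, AA Y x (n + 1) := by
    intro ω hω
    obtain ⟨k, hk1, hkx⟩ := hω
    have hex : ∃ m, 1 ≤ m ∧ x < WS Y m ω := ⟨k, hk1, hkx⟩
    obtain ⟨hn1, hnx⟩ := Nat.find_spec hex
    rw [Set.mem_iUnion]
    refine ⟨Nat.find hex - 1, ?_⟩
    have hrw : Nat.find hex - 1 + 1 = Nat.find hex := by omega
    rw [hrw]
    refine ⟨hnx, ?_⟩
    intro m h1 h2
    by_contra hcon
    exact Nat.find_min hex h2 ⟨h1, lt_of_not_ge hcon⟩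
  have htail : ∑' n : ℕ, ∫⁻ ω in AA Y x (n + 1), FF Y h (n + 1) ω ∂μ
      ≤ ⨆ k, ⨆ (_ : 1 ≤ k), ∫⁻ ω, FF Y h k ω ∂μ := by
    rw [ENNReal.tsum_eq_iSup_nat]
    exact iSup_le fun N => perN hmeas hind N
  calc μ {ω | ∃ k ≥ 1, x < WS Y k ω}
      ≤ μ (⋃ n : ℕ, AA Y x (n + 1)) := measure_mono hsub
    _ ≤ ∑' n : ℕ, μ (AA Y x (n + 1)) := measure_iUnion_le _
    _ ≤ ∑' n : ℕ, ENNReal.ofReal (Real.exp (-h * x))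
        * ∫⁻ ω in AA Y x (n + 1), FF Y h (n + 1) ω ∂μ :=
        ENNReal.tsum_le_tsum fun n => AA_bound hmeas hh (n + 1)
    _ = ENNReal.ofReal (Real.exp (-h * x))
        * ∑' n : ℕ, ∫⁻ ω in AA Y x (n + 1), FF Y h (n + 1) ω ∂μ := ENNReal.tsum_mul_left
    _ ≤ _ := mul_le_mul_right htail _

end Aux

/-- Maximal exponential inequality for partial sums of independent random variables
(infinite case): `P(sup_{k≥1} W_k > x) ≤ e^{-hx} · sup_{k≥1} E[e^{h W_k}]`. -/
theorem stmt1 {Ω : Type*} [MeasurableSpace Ω] (μ : Measure Ω) [IsProbabilityMeasure μ]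
    (Y : ℕ → Ω → ℝ) (hmeas : ∀ i, Measurable (Y i))
    (hind : iIndepFun Y μ)
    (x h : ℝ) (hh : 0 ≤ h)
    (W : ℕ → Ω → ℝ) (hW : ∀ k ω, W k ω = ∑ i ∈ Finset.range k, Y i ω) :
    μ {ω | ∃ k ≥ 1, x < W k ω}
      ≤ ENNReal.ofReal (Real.exp (-h * x)) *
        ⨆ k, ⨆ (_ : 1 ≤ k), ∫⁻ ω, ENNReal.ofReal (Real.exp (h * W k ω)) ∂μ := by
  have hWf : W = fun k ω => ∑ i ∈ Finset.range k, Y i ω :=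
    funext fun k => funext fun ω => hW k ω
  subst hWf
  exact main_aux hmeas hind hh
end

section
/- For any nonnegative random variable X and any h, C ≥ 0, E[g(−hX)] ≤ (h²/2)·E[X²·1_{0 < X ≤ C}] + h·E[X·1_{X > C}], where g(x) = e^x − 1 − x. -/
open MeasureTheory ProbabilityTheory Real

lemma quad_bound : ∀ x : ℝ, 0 ≤ x → exp (-x) - 1 + x ≤ x ^ 2 / 2 := by
  have hmono : MonotoneOn (fun x : ℝ => x ^ 2 / 2 - (exp (-x) - 1 + x)) (Set.Ici 0) := by
    apply monotoneOn_of_deriv_nonneg (convex_Ici 0)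
    · fun_prop
    · apply Differentiable.differentiableOn; fun_prop
    · intro x hx
      simp only [interior_Ici, Set.mem_Ioi] at hx
      have h1 : HasDerivAt (fun x : ℝ => x ^ 2 / 2 - (exp (-x) - 1 + x)) (x - (-exp (-x) + 1)) x := by
        have : HasDerivAt (fun x : ℝ => exp (-x)) (-exp (-x)) x := by
          exact ((hasDerivAt_neg x).exp).congr_deriv (by ring)
        exact (((hasDerivAt_pow 2 x).div_const 2).sub
          (((this.sub_const 1).add (hasDerivAt_id x)))).congr_deriv (by ring)
      rw [h1.deriv]
      nlinarith [add_one_le_exp (-x), exp_pos (-x)]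
  intro x hx
  have := hmono (Set.self_mem_Ici) hx hx
  simp at this
  nlinarith [this]

/-- For a nonnegative random variable `X` and `h, C ≥ 0`,
`E[g(−hX)] ≤ (h²/2)·E[X²·1_{0<X≤C}] + h·E[X·1_{X>C}]` where `g(x) = eˣ − 1 − x`. -/
theorem stmt5 {Ω : Type*} [MeasurableSpace Ω] (μ : Measure Ω) [IsProbabilityMeasure μ]
    (X : Ω → ℝ) (hXm : Measurable X) (hX : ∀ ω, 0 ≤ X ω)
    (h C : ℝ) (hh : 0 ≤ h) (hC : 0 ≤ C) :
    ∫⁻ ω, ENNReal.ofReal (Real.exp (-h * X ω) - 1 - (-h * X ω)) ∂μ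
      ≤ ENNReal.ofReal (h ^ 2 / 2) *
          (∫⁻ ω, ENNReal.ofReal (if 0 < X ω ∧ X ω ≤ C then X ω ^ 2 else 0) ∂μ)
        + ENNReal.ofReal h *
          ∫⁻ ω, ENNReal.ofReal (if C < X ω then X ω else 0) ∂μ := by
  have key : ∀ ω, ENNReal.ofReal (Real.exp (-h * X ω) - 1 - (-h * X ω))
      ≤ ENNReal.ofReal (h ^ 2 / 2) * ENNReal.ofReal (if 0 < X ω ∧ X ω ≤ C then X ω ^ 2 else 0)
        + ENNReal.ofReal h * ENNReal.ofReal (if C < X ω then X ω else 0) := by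
    intro ω
    by_cases hc : C < X ω
    · have hb : exp (-h * X ω) - 1 - (-h * X ω) ≤ h * X ω := by
        have h1 : exp (-h * X ω) ≤ 1 := exp_le_one_iff.mpr (by nlinarith [hX ω])
        nlinarith [hX ω]
      refine le_add_left ?_
      rw [if_pos hc, ← ENNReal.ofReal_mul hh]
      exact ENNReal.ofReal_le_ofReal hb
    · by_cases hz : X ω = 0
      · simp [hz]
      · have hpos : 0 < X ω := lt_of_le_of_ne (hX ω) (Ne.symm hz)
        have hb : exp (-h * X ω) - 1 - (-h * X ω) ≤ h ^ 2 / 2 * X ω ^ 2 := by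
          have := quad_bound (h * X ω) (by positivity)
          have e : -h * X ω = -(h * X ω) := by ring
          rw [e]
          nlinarith [this]
        refine le_add_right ?_
        rw [if_pos ⟨hpos, not_lt.mp hc⟩, ← ENNReal.ofReal_mul (by positivity)]
        exact ENNReal.ofReal_le_ofReal hb
  have m1 : Measurable fun ω => ENNReal.ofReal (if 0 < X ω ∧ X ω ≤ C then X ω ^ 2 else 0) := by
    apply Measurable.ennreal_ofReal
    exact Measurable.ite ((measurableSet_lt measurable_const hXm).inter
      (measurableSet_le hXm measurable_const)) (hXm.pow_const 2) measurable_const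
  have m2 : Measurable fun ω => ENNReal.ofReal (if C < X ω then X ω else 0) := by
    apply Measurable.ennreal_ofReal
    exact Measurable.ite (measurableSet_lt measurable_const hXm) hXm measurable_const
  calc ∫⁻ ω, ENNReal.ofReal (Real.exp (-h * X ω) - 1 - (-h * X ω)) ∂μ
      ≤ ∫⁻ ω, (ENNReal.ofReal (h ^ 2 / 2) * ENNReal.ofReal (if 0 < X ω ∧ X ω ≤ C then X ω ^ 2 else 0)
          + ENNReal.ofReal h * ENNReal.ofReal (if C < X ω then X ω else 0)) ∂μ :=
        lintegral_mono key
    _ = _ := by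
        rw [lintegral_add_left (m1.const_mul _), lintegral_const_mul _ m1, lintegral_const_mul _ m2]
end

section
/- The function x ↦ g(x)/x² = (e^x − 1 − x)/x² (with value 1/2 at x = 0) is nondecreasing on the real line. -/
open Real intervalIntegral

lemma stmt7_key (x : ℝ) :
    (if x = 0 then 1 / 2 else (Real.exp x - 1 - x) / x ^ 2)
      = ∫ t in (0:ℝ)..1, (1 - t) * Real.exp (t * x) := by
  by_cases hx : x = 0
  · subst hx
    simp only [if_pos rfl, mul_zero, Real.exp_zero, mul_one]
    rw [intervalIntegral.integral_sub intervalIntegrable_const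
      (intervalIntegral.intervalIntegrable_id)]
    simp
    norm_num
  · rw [if_neg hx]
    have h : ∀ t ∈ Set.uIcc (0:ℝ) 1,
        HasDerivAt (fun t => ((1 - t) / x + 1 / x ^ 2) * Real.exp (t * x))
          ((1 - t) * Real.exp (t * x)) t := by
      intro t _
      have h1 : HasDerivAt (fun t : ℝ => (1 - t) / x + 1 / x ^ 2) (-1 / x) t := by
        have : HasDerivAt (fun t : ℝ => (1 - t) / x) (-1 / x) t := by
          have := ((hasDerivAt_id t).const_sub 1).div_const x
          simpa using this
        exact this.add_const (1 / x ^ 2)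
      have h2 : HasDerivAt (fun t : ℝ => Real.exp (t * x)) (Real.exp (t * x) * x) t := by
        have := (Real.hasDerivAt_exp (t * x)).comp t ((hasDerivAt_id t).mul_const x)
        simpa [Function.comp_def] using this
      have := h1.mul h2
      refine this.congr_deriv ?_
      field_simp
      ring
    have hint : IntervalIntegrable (fun t => (1 - t) * Real.exp (t * x))
        MeasureTheory.volume 0 1 :=
      (Continuous.intervalIntegrable (by continuity) 0 1)
    rw [intervalIntegral.integral_eq_sub_of_hasDerivAt h hint]
    field_simp
    rw [mul_zero, Real.exp_zero]
    ring

/-- The function `x ↦ (eˣ − 1 − x)/x²` (with value `1/2` at `x = 0`) is nondecreasing on `ℝ`. -/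
theorem stmt7 :
    Monotone (fun x : ℝ => if x = 0 then 1 / 2 else (Real.exp x - 1 - x) / x ^ 2) := by
  intro a b hab
  simp only [stmt7_key]
  apply intervalIntegral.integral_mono_on (by norm_num)
    (Continuous.intervalIntegrable (by continuity) 0 1)
    (Continuous.intervalIntegrable (by continuity) 0 1)
  intro t ht
  have ht0 : 0 ≤ t := ht.1
  have ht1 : t ≤ 1 := ht.2
  have : Real.exp (t * a) ≤ Real.exp (t * b) :=
    Real.exp_le_exp.2 (mul_le_mul_of_nonneg_left hab ht0)
  exact mul_le_mul_of_nonneg_left this (by linarith)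
end

section
/- Let Y_k = Z_k − X_k with Z_k, X_k ≥ 0 independent random variables with finite means, S_n = ∑_{k≤n} Y_k. Define A_n(C) = ∑_{k=1}^n E[X_k·1_{X_k > C}] and B_n(H,C) = H^{-2} ∑_{k=1}^n E[g(H Z_k)] + (1/2) ∑_{k=1}^n E[X_k²·1_{X_k ≤ C}], where g(x) = e^x − 1 − x. Then for any h ∈ (0, H] and C > 0, E[e^{h S_n}] ≤ exp(h·E[S_n] + h·A_n(C) + h²·B_n(h, C)), and moreover B_n(h, C) ≤ B_n(H, C). -/
open MeasureTheory ProbabilityTheory Real Finset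

section Aux
open Nat
lemma g_summable (x : ℝ) : Summable (fun n : ℕ => x ^ (n + 2) / (n + 2)!) :=
  (Real.summable_pow_div_factorial x).comp_injective (add_left_injective 2)

lemma g_series (x : ℝ) : Real.exp x - 1 - x = ∑' n : ℕ, x ^ (n + 2) / (n + 2)! := by
  have hsum : Summable (fun n : ℕ => x ^ n / n !) := Real.summable_pow_div_factorial x
  have h1 : Real.exp x = ∑' n : ℕ, x ^ n / n ! := by
    rw [Real.exp_eq_exp_ℝ, NormedSpace.exp_eq_tsum_div]
  have h2 := Summable.tsum_eq_zero_add hsum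
  have h3 := Summable.tsum_eq_zero_add (hsum.comp_injective (add_left_injective 1))
  simp only [Function.comp] at h3
  rw [h1, h2, h3]
  simp [Nat.factorial]

lemma g_nonneg {x : ℝ} : 0 ≤ Real.exp x - 1 - x := by
  nlinarith [Real.add_one_le_exp x]

lemma g_mono_sq {a b : ℝ} (ha : 0 ≤ a) (hab : a ≤ b) :
    b ^ 2 * (Real.exp a - 1 - a) ≤ a ^ 2 * (Real.exp b - 1 - b) := by
  rw [g_series a, g_series b, ← tsum_mul_left, ← tsum_mul_left]
  refine Summable.tsum_le_tsum (fun n => ?_) ((g_summable a).mul_left _) ((g_summable b).mul_left _)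
  have hb : 0 ≤ b := ha.trans hab
  rw [mul_div_assoc', mul_div_assoc', div_le_div_iff₀ (by positivity) (by positivity)]
  have key : b ^ 2 * a ^ (n + 2) ≤ a ^ 2 * b ^ (n + 2) := by
    calc b ^ 2 * a ^ (n + 2) = (a * b) ^ 2 * a ^ n := by ring
    _ ≤ (a * b) ^ 2 * b ^ n := by
        apply mul_le_mul_of_nonneg_left (pow_le_pow_left₀ ha hab n) (by positivity)
    _ = a ^ 2 * b ^ (n + 2) := by ring
  have hfac : (0:ℝ) < ((n+2)! : ℝ) := by positivity
  nlinarith [key, hfac]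

lemma g_split {a b : ℝ} (ha : 0 ≤ a) (hb : 0 ≤ b) :
    Real.exp (a - b) - 1 - (a - b) ≤ (Real.exp a - 1 - a) + (Real.exp (-b) - 1 - (-b)) := by
  have h1 : Real.exp (a - b) = Real.exp a * Real.exp (-b) := by
    rw [← Real.exp_add]; ring_nf
  have h2 : 1 ≤ Real.exp a := Real.one_le_exp ha
  have h3 : Real.exp (-b) ≤ 1 := Real.exp_le_one_iff.mpr (by linarith)
  nlinarith [Real.exp_pos (-b)]

lemma exp_neg_quad {t : ℝ} (ht : 0 ≤ t) : Real.exp (-t) - 1 - (-t) ≤ t ^ 2 / 2 := by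
  set f : ℝ → ℝ := fun s => 1 - s + s ^ 2 / 2 - Real.exp (-s) with hf
  have hd : ∀ x : ℝ, HasDerivAt f (x - 1 + Real.exp (-x)) x := by
    intro x
    have h1 : HasDerivAt (fun s : ℝ => Real.exp (-s)) (-Real.exp (-x)) x := by
      exact (hasDerivAt_neg x).exp.congr_deriv (by ring)
    have h2 : HasDerivAt (fun s : ℝ => 1 - s + s ^ 2 / 2) (-1 + x) x := by
      have := ((hasDerivAt_id x).const_sub 1).add (((hasDerivAt_pow 2 x)).div_const 2)
      exact this.congr_deriv (by push_cast; ring)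
    have := h2.sub h1
    exact this.congr_deriv (by ring)
  have hmono : MonotoneOn f (Set.Ici 0) := by
    apply monotoneOn_of_deriv_nonneg (convex_Ici 0)
    · exact (Continuous.continuousOn (by fun_prop))
    · exact fun x _ => ((hd x).differentiableAt).differentiableWithinAt
    · intro x hx
      rw [(hd x).deriv]
      rw [interior_Ici, Set.mem_Ioi] at hx
      nlinarith [Real.add_one_le_exp (-x)]
  have h0 : f 0 = 0 := by simp [hf]
  have := hmono (Set.mem_Ici.2 le_rfl) (Set.mem_Ici.2 ht) ht
  rw [h0] at this
  simp only [hf] at this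
  linarith

lemma g_neg_trunc {x h C : ℝ} (hx : 0 ≤ x) (h0 : 0 < h) (hC : 0 < C) :
    Real.exp (-(h * x)) - 1 - (-(h * x)) ≤
      h * (if C < x then x else 0) + h ^ 2 / 2 * (if x ≤ C then x ^ 2 else 0) := by
  by_cases hxC : x ≤ C
  · rw [if_neg (not_lt.2 hxC), if_pos hxC]
    have := exp_neg_quad (t := h * x) (by positivity)
    nlinarith
  · rw [if_pos (not_le.1 hxC), if_neg hxC]
    have : Real.exp (-(h * x)) ≤ 1 := Real.exp_le_one_iff.mpr (by nlinarith)
    nlinarith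

lemma mgf_single {Ω : Type*} [MeasurableSpace Ω] (μ : Measure Ω) [IsProbabilityMeasure μ]
    (Z X : Ω → ℝ) (hZm : Measurable Z) (hXm : Measurable X)
    (hZ0 : ∀ ω, 0 ≤ Z ω) (hX0 : ∀ ω, 0 ≤ X ω)
    (hZint : Integrable Z μ) (hXint : Integrable X μ)
    (h H C : ℝ) (h0 : 0 < h) (hhH : h ≤ H) (hC : 0 < C)
    (hgint : Integrable (fun ω => Real.exp (H * Z ω)) μ) :
    ∫ ω, Real.exp (h * (Z ω - X ω)) ∂μ ≤
      Real.exp (h * (∫ ω, (Z ω - X ω) ∂μ)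
        + (∫ ω, (Real.exp (h * Z ω) - 1 - h * Z ω) ∂μ)
        + h * (∫ ω, (if C < X ω then X ω else 0) ∂μ)
        + h ^ 2 / 2 * (∫ ω, (if X ω ≤ C then X ω ^ 2 else 0) ∂μ)) := by
  have hH0 : 0 < H := lt_of_lt_of_le h0 hhH
  have intY : Integrable (fun ω => Z ω - X ω) μ := hZint.sub hXint
  have int_expY : Integrable (fun ω => Real.exp (h * (Z ω - X ω))) μ := by
    refine hgint.mono' (((hZm.sub hXm).const_mul h).exp.aestronglyMeasurable)
      (Filter.Eventually.of_forall fun ω => ?_)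
    rw [Real.norm_eq_abs, abs_of_pos (Real.exp_pos _)]
    apply Real.exp_le_exp.2
    nlinarith [hZ0 ω, hX0 ω]
  have int_gY : Integrable (fun ω => Real.exp (h * (Z ω - X ω)) - 1 - h * (Z ω - X ω)) μ :=
    (int_expY.sub (integrable_const 1)).sub (intY.const_mul h)
  have int_exph : Integrable (fun ω => Real.exp (h * Z ω)) μ := by
    refine hgint.mono' ((hZm.const_mul h).exp.aestronglyMeasurable)
      (Filter.Eventually.of_forall fun ω => ?_)
    rw [Real.norm_eq_abs, abs_of_pos (Real.exp_pos _)]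
    apply Real.exp_le_exp.2
    nlinarith [hZ0 ω]
  have int_gZ : Integrable (fun ω => Real.exp (h * Z ω) - 1 - h * Z ω) μ :=
    (int_exph.sub (integrable_const 1)).sub (hZint.const_mul h)
  have int_tA : Integrable (fun ω => if C < X ω then X ω else 0) μ := by
    refine hXint.mono' ((hXm.ite (measurableSet_lt measurable_const hXm) measurable_const).aestronglyMeasurable)
      (Filter.Eventually.of_forall fun ω => ?_)
    by_cases hc : C < X ω <;> simp [hc, abs_of_nonneg, hX0 ω]
  have int_tQ : Integrable (fun ω => if X ω ≤ C then X ω ^ 2 else 0) μ := by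
    refine (hXint.const_mul C).mono' (((hXm.pow_const 2).ite (measurableSet_le hXm measurable_const) measurable_const).aestronglyMeasurable)
      (Filter.Eventually.of_forall fun ω => ?_)
    by_cases hc : X ω ≤ C
    · simp only [if_pos hc]
      rw [Real.norm_eq_abs, abs_of_nonneg (by positivity)]
      nlinarith [hX0 ω]
    · simp only [if_neg hc]
      rw [norm_zero]
      nlinarith [hX0 ω, hC]
  have int_lin : Integrable (fun ω => 1 + h * (Z ω - X ω)) μ :=
    (integrable_const 1).add (intY.const_mul h)
  have int_rhs2 : Integrable (fun ω => h * (if C < X ω then X ω else 0)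
      + h ^ 2 / 2 * (if X ω ≤ C then X ω ^ 2 else 0)) μ :=
    (int_tA.const_mul h).add (int_tQ.const_mul (h ^ 2 / 2))
  have int_rhs : Integrable (fun ω => (Real.exp (h * Z ω) - 1 - h * Z ω)
      + (h * (if C < X ω then X ω else 0) + h ^ 2 / 2 * (if X ω ≤ C then X ω ^ 2 else 0))) μ :=
    int_gZ.add int_rhs2
  have step1 : ∫ ω, Real.exp (h * (Z ω - X ω)) ∂μ
      = 1 + h * (∫ ω, (Z ω - X ω) ∂μ)
        + ∫ ω, (Real.exp (h * (Z ω - X ω)) - 1 - h * (Z ω - X ω)) ∂μ := by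
    have e : ∫ ω, Real.exp (h * (Z ω - X ω)) ∂μ
        = ∫ ω, ((1 + h * (Z ω - X ω))
          + (Real.exp (h * (Z ω - X ω)) - 1 - h * (Z ω - X ω))) ∂μ := by
      apply integral_congr_ae
      filter_upwards with ω
      ring
    rw [e, integral_add int_lin int_gY, integral_add (integrable_const 1) (intY.const_mul h),
      integral_const_mul, integral_const]
    simp
  have step2 : ∫ ω, (Real.exp (h * (Z ω - X ω)) - 1 - h * (Z ω - X ω)) ∂μ
      ≤ (∫ ω, (Real.exp (h * Z ω) - 1 - h * Z ω) ∂μ)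
        + h * (∫ ω, (if C < X ω then X ω else 0) ∂μ)
        + h ^ 2 / 2 * (∫ ω, (if X ω ≤ C then X ω ^ 2 else 0) ∂μ) := by
    have hle : ∀ ω, Real.exp (h * (Z ω - X ω)) - 1 - h * (Z ω - X ω)
        ≤ (Real.exp (h * Z ω) - 1 - h * Z ω)
          + (h * (if C < X ω then X ω else 0) + h ^ 2 / 2 * (if X ω ≤ C then X ω ^ 2 else 0)) := by
      intro ω
      have hsplit := g_split (a := h * Z ω) (b := h * X ω)
        (mul_nonneg h0.le (hZ0 ω)) (mul_nonneg h0.le (hX0 ω))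
      have htr := g_neg_trunc (x := X ω) (h := h) (C := C) (hX0 ω) h0 hC
      have hz : h * (Z ω - X ω) = h * Z ω - h * X ω := by ring
      rw [hz]
      calc Real.exp (h * Z ω - h * X ω) - 1 - (h * Z ω - h * X ω)
          ≤ (Real.exp (h * Z ω) - 1 - h * Z ω)
            + (Real.exp (-(h * X ω)) - 1 - (-(h * X ω))) := hsplit
        _ ≤ _ := by linarith
    have := integral_mono int_gY int_rhs hle
    rw [integral_add int_gZ int_rhs2, integral_add (int_tA.const_mul h)
      (int_tQ.const_mul (h ^ 2 / 2)), integral_const_mul, integral_const_mul] at this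
    linarith
  have expb := Real.add_one_le_exp (h * (∫ ω, (Z ω - X ω) ∂μ)
    + ∫ ω, (Real.exp (h * (Z ω - X ω)) - 1 - h * (Z ω - X ω)) ∂μ)
  have mono := Real.exp_le_exp.2 (show
      h * (∫ ω, (Z ω - X ω) ∂μ)
        + ∫ ω, (Real.exp (h * (Z ω - X ω)) - 1 - h * (Z ω - X ω)) ∂μ
      ≤ h * (∫ ω, (Z ω - X ω) ∂μ)
        + (∫ ω, (Real.exp (h * Z ω) - 1 - h * Z ω) ∂μ)
        + h * (∫ ω, (if C < X ω then X ω else 0) ∂μ)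
        + h ^ 2 / 2 * (∫ ω, (if X ω ≤ C then X ω ^ 2 else 0) ∂μ) by linarith)
  linarith

lemma g_ratio {h H z : ℝ} (h0 : 0 < h) (hhH : h ≤ H) (hz : 0 ≤ z) :
    (1 / h ^ 2) * (Real.exp (h * z) - 1 - h * z)
      ≤ (1 / H ^ 2) * (Real.exp (H * z) - 1 - H * z) := by
  have hH0 : 0 < H := h0.trans_le hhH
  rcases eq_or_lt_of_le hz with rfl | hz'
  · simp
  · have key := g_mono_sq (a := h * z) (b := H * z)
      (by positivity) (by nlinarith)
    rw [div_mul_eq_mul_div, div_mul_eq_mul_div, one_mul, one_mul,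
      div_le_div_iff₀ (by positivity) (by positivity)]
    nlinarith [key, hz', mul_pos hz' hz']

lemma int_g {Ω : Type*} [MeasurableSpace Ω] (μ : Measure Ω) [IsProbabilityMeasure μ]
    (Z : Ω → ℝ) (hZm : Measurable Z) (hZ0 : ∀ ω, 0 ≤ Z ω) (hZint : Integrable Z μ)
    (h H : ℝ) (h0 : 0 < h) (hhH : h ≤ H)
    (hgint : Integrable (fun ω => Real.exp (H * Z ω)) μ) :
    Integrable (fun ω => Real.exp (h * Z ω) - 1 - h * Z ω) μ := by
  have int_exph : Integrable (fun ω => Real.exp (h * Z ω)) μ := by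
    refine hgint.mono' ((hZm.const_mul h).exp.aestronglyMeasurable)
      (Filter.Eventually.of_forall fun ω => ?_)
    rw [Real.norm_eq_abs, abs_of_pos (Real.exp_pos _)]
    apply Real.exp_le_exp.2
    nlinarith [hZ0 ω]
  exact (int_exph.sub (integrable_const 1)).sub (hZint.const_mul h)

end Aux

/-- Bennett–Hoeffding-type exponential bound:
`E[e^{hSₙ}] ≤ exp(h E[Sₙ] + h Aₙ(C) + h² Bₙ(h,C))` and `Bₙ(h,C) ≤ Bₙ(H,C)` for `0 < h ≤ H`. -/
theorem stmt9 {Ω : Type*} [MeasurableSpace Ω] (μ : Measure Ω) [IsProbabilityMeasure μ]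
    (Z X : ℕ → Ω → ℝ)
    (hZm : ∀ k, Measurable (Z k)) (hXm : ∀ k, Measurable (X k))
    (hZ0 : ∀ k ω, 0 ≤ Z k ω) (hX0 : ∀ k ω, 0 ≤ X k ω)
    (hind : iIndepFun (fun k ω => (Z k ω, X k ω)) μ)
    (hZint : ∀ k, Integrable (Z k) μ) (hXint : ∀ k, Integrable (X k) μ)
    (n : ℕ) (h H C : ℝ) (h0 : 0 < h) (hhH : h ≤ H) (hC : 0 < C)
    (hgint : ∀ k, Integrable (fun ω => Real.exp (H * Z k ω)) μ)
    (S : ℕ → Ω → ℝ) (hS : ∀ m ω, S m ω = ∑ k ∈ Finset.range m, (Z k ω - X k ω))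
    (A : ℝ → ℕ → ℝ)
    (hA : ∀ C' m, A C' m = ∑ k ∈ Finset.range m,
      ∫ ω, (if C' < X k ω then X k ω else 0) ∂μ)
    (B : ℝ → ℝ → ℕ → ℝ)
    (hB : ∀ h' C' m, B h' C' m =
      (1 / h' ^ 2) * (∑ k ∈ Finset.range m,
          ∫ ω, (Real.exp (h' * Z k ω) - 1 - h' * Z k ω) ∂μ)
        + (1 / 2) * ∑ k ∈ Finset.range m,
            ∫ ω, (if X k ω ≤ C' then X k ω ^ 2 else 0) ∂μ) :
    (∫ ω, Real.exp (h * S n ω) ∂μ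
        ≤ Real.exp (h * (∫ ω, S n ω ∂μ) + h * A C n + h ^ 2 * B h C n))
    ∧ B h C n ≤ B H C n := by
  have hH0 : 0 < H := h0.trans_le hhH
  set Y : ℕ → Ω → ℝ := fun k ω => Z k ω - X k ω with hY
  have hYm : ∀ k, Measurable (Y k) := fun k => (hZm k).sub (hXm k)
  have hYind : iIndepFun Y μ :=
    hind.comp (fun _ (p : ℝ × ℝ) => p.1 - p.2) (fun _ => measurable_fst.sub measurable_snd)
  constructor
  · -- main estimate
    have hmgf : ∫ ω, Real.exp (h * S n ω) ∂μ = mgf (∑ k ∈ Finset.range n, Y k) μ h := by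
      apply integral_congr_ae
      filter_upwards with ω
      rw [hS n ω]
      simp [hY, Finset.sum_apply]
    rw [hmgf, hYind.mgf_sum hYm (Finset.range n)]
    have hbound : ∀ k ∈ Finset.range n, mgf (Y k) μ h ≤
        Real.exp (h * (∫ ω, (Z k ω - X k ω) ∂μ)
          + (∫ ω, (Real.exp (h * Z k ω) - 1 - h * Z k ω) ∂μ)
          + h * (∫ ω, (if C < X k ω then X k ω else 0) ∂μ)
          + h ^ 2 / 2 * (∫ ω, (if X k ω ≤ C then X k ω ^ 2 else 0) ∂μ)) := by
      intro k _
      exact mgf_single μ (Z k) (X k) (hZm k) (hXm k) (hZ0 k) (hX0 k) (hZint k) (hXint k)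
        h H C h0 hhH hC (hgint k)
    calc ∏ k ∈ Finset.range n, mgf (Y k) μ h
        ≤ ∏ k ∈ Finset.range n, Real.exp (h * (∫ ω, (Z k ω - X k ω) ∂μ)
          + (∫ ω, (Real.exp (h * Z k ω) - 1 - h * Z k ω) ∂μ)
          + h * (∫ ω, (if C < X k ω then X k ω else 0) ∂μ)
          + h ^ 2 / 2 * (∫ ω, (if X k ω ≤ C then X k ω ^ 2 else 0) ∂μ)) :=
          Finset.prod_le_prod (fun k _ => mgf_nonneg) hbound
      _ = Real.exp (∑ k ∈ Finset.range n, (h * (∫ ω, (Z k ω - X k ω) ∂μ)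
          + (∫ ω, (Real.exp (h * Z k ω) - 1 - h * Z k ω) ∂μ)
          + h * (∫ ω, (if C < X k ω then X k ω else 0) ∂μ)
          + h ^ 2 / 2 * (∫ ω, (if X k ω ≤ C then X k ω ^ 2 else 0) ∂μ))) :=
          (Real.exp_sum _ _).symm
      _ = Real.exp (h * (∫ ω, S n ω ∂μ) + h * A C n + h ^ 2 * B h C n) := by
          congr 1
          have hES : ∫ ω, S n ω ∂μ = ∑ k ∈ Finset.range n, ∫ ω, (Z k ω - X k ω) ∂μ := by
            rw [integral_congr_ae (Filter.Eventually.of_forall fun ω => hS n ω)]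
            exact integral_finset_sum _ (fun k _ => (hZint k).sub (hXint k))
          rw [hES, hA, hB]
          simp only [Finset.sum_add_distrib, ← Finset.mul_sum]
          field_simp
          ring
  · -- monotonicity of B
    rw [hB, hB]
    have key : (1 / h ^ 2) * (∑ k ∈ Finset.range n,
          ∫ ω, (Real.exp (h * Z k ω) - 1 - h * Z k ω) ∂μ)
        ≤ (1 / H ^ 2) * (∑ k ∈ Finset.range n,
          ∫ ω, (Real.exp (H * Z k ω) - 1 - H * Z k ω) ∂μ) := by
      rw [Finset.mul_sum, Finset.mul_sum]
      apply Finset.sum_le_sum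
      intro k _
      have inth : Integrable (fun ω => Real.exp (h * Z k ω) - 1 - h * Z k ω) μ :=
        int_g μ (Z k) (hZm k) (hZ0 k) (hZint k) h H h0 hhH (hgint k)
      have intH : Integrable (fun ω => Real.exp (H * Z k ω) - 1 - H * Z k ω) μ :=
        int_g μ (Z k) (hZm k) (hZ0 k) (hZint k) H H hH0 le_rfl (hgint k)
      rw [← integral_const_mul, ← integral_const_mul]
      exact integral_mono (inth.const_mul _) (intH.const_mul _)
        (fun ω => g_ratio h0 hhH (hZ0 k ω))
    linarith
end
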